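/- (Second-order Jensen for the logarithm) For a bounded positive random variable Z with 0 < Z ≤ m almost surely, where m = (essential) maximum of Z: -log E[Z] ≤ E[-log Z] - E[(Z - E[Z])²] / (2m²). -/

import Mathlib

open MeasureTheory

lemma log_taylor_key (a m z : ℝ) (ha : 0 < a) (ham : a ≤ m) (hz : 0 < z) (hzm : z ≤ m) :
    Real.log z ≤ Real.log a + (z - a)/a - (z - a)^2/(2*m^2) := by
  have hm : 0 < m := lt_of_lt_of_le ha ham
  set f : ℝ → ℝ := fun t => Real.log a + (t - a)/a - (t - a)^2/(2*m^2) - Real.log t with hf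
  have hfa : f a = 0 := by simp [hf]
  have hder : ∀ t : ℝ, 0 < t →
      HasDerivAt f ((t - a)*(m^2 - a*t)/(a*t*m^2)) t := by
    intro t ht
    have h1 : HasDerivAt (fun t : ℝ => Real.log a + (t - a)/a - (t - a)^2/(2*m^2)
        - Real.log t) (1/a - 2*(t-a)/(2*m^2) - t⁻¹) t := by
      have hlin : HasDerivAt (fun t : ℝ => (t - a)/a) (1/a) t := by
        simpa using ((hasDerivAt_id t).sub_const a).div_const a
      have hsq : HasDerivAt (fun t : ℝ => (t - a)^2/(2*m^2)) (2*(t-a)/(2*m^2)) t := by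
        have := (((hasDerivAt_id t).sub_const a).pow 2).div_const (2*m^2)
        simpa [mul_comm, mul_assoc] using this
      have hlog := Real.hasDerivAt_log (ne_of_gt ht)
      have h := (((hasDerivAt_const t (Real.log a)).add hlin).sub hsq).sub hlog
      simp only [zero_add] at h
      exact h
    have heq : 1/a - 2*(t-a)/(2*m^2) - t⁻¹ = (t - a)*(m^2 - a*t)/(a*t*m^2) := by
      field_simp
      ring
    rw [← hf, heq] at h1
    exact h1
  have hcont : ∀ s : Set ℝ, s ⊆ Set.Ioi (0:ℝ) → ContinuousOn f s := by
    intro s hs t ht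
    exact ((hder t (hs ht)).continuousAt).continuousWithinAt
  have hmain : 0 ≤ f z := by
    rcases le_total z a with hle | hle
    · -- f antitone on [z, a]
      have hanti : AntitoneOn f (Set.Icc z a) := by
        apply antitoneOn_of_deriv_nonpos (convex_Icc z a)
        · exact hcont _ (fun t ht => lt_of_lt_of_le hz ht.1)
        · intro t ht
          rw [interior_Icc] at ht
          exact ((hder t (lt_trans hz ht.1)).differentiableAt).differentiableWithinAt
        · intro t ht
          rw [interior_Icc] at ht
          have ht0 : 0 < t := lt_trans hz ht.1
          rw [(hder t ht0).deriv]
          apply div_nonpos_of_nonpos_of_nonneg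
          · apply mul_nonpos_of_nonpos_of_nonneg
            · linarith [ht.2]
            · nlinarith [ht.2, ham, ht0, ha]
          · positivity
      have := hanti ⟨le_refl z, hle⟩ ⟨hle, le_refl a⟩ hle
      rw [hfa] at this
      exact this
    · -- f monotone on [a, z]
      have hmono : MonotoneOn f (Set.Icc a z) := by
        apply monotoneOn_of_deriv_nonneg (convex_Icc a z)
        · exact hcont _ (fun t ht => lt_of_lt_of_le ha ht.1)
        · intro t ht
          rw [interior_Icc] at ht
          exact ((hder t (lt_trans ha ht.1)).differentiableAt).differentiableWithinAt
        · intro t ht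
          rw [interior_Icc] at ht
          have ht0 : 0 < t := lt_trans ha ht.1
          rw [(hder t ht0).deriv]
          apply div_nonneg
          · apply mul_nonneg
            · linarith [ht.1]
            · nlinarith [ht.2, hzm, ha, ht0]
          · positivity
      have := hmono ⟨le_refl a, hle⟩ ⟨hle, le_refl z⟩ hle
      rw [hfa] at this
      exact this
  simp only [hf] at hmain
  linarith

/-- Second-order Jensen inequality for the logarithm: for a bounded positive
random variable 0 < Z ≤ m a.s.,
−log E[Z] ≤ E[−log Z] − E[(Z − E[Z])²]/(2m²). -/
theorem second_order_jensen_log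
    {Ω : Type*} [MeasurableSpace Ω]
    (μ : Measure Ω) [IsProbabilityMeasure μ]
    (Z : Ω → ℝ) (hmeas : Measurable Z)
    (m : ℝ) (hm : 0 < m)
    (hZ : ∀ᵐ ω ∂μ, 0 < Z ω ∧ Z ω ≤ m)
    (hEZ : 0 < ∫ ω, Z ω ∂μ)
    (hintZ : Integrable Z μ)
    (hintlog : Integrable (fun ω => Real.log (Z ω)) μ) :
    -Real.log (∫ ω, Z ω ∂μ)
      ≤ (∫ ω, -Real.log (Z ω) ∂μ)
        - (∫ ω, (Z ω - ∫ ω', Z ω' ∂μ) ^ 2 ∂μ) / (2 * m ^ 2) := by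
  set a := ∫ ω, Z ω ∂μ with ha_def
  have ham : a ≤ m := by
    have h1 : a ≤ ∫ _, m ∂μ :=
      integral_mono_ae hintZ (integrable_const m) (hZ.mono fun ω h => h.2)
    simpa using h1
  -- integrability of (Z - a)^2
  have hsq_int : Integrable (fun ω => (Z ω - a)^2) μ := by
    apply Integrable.mono' (integrable_const (m^2))
      ((hmeas.sub measurable_const).pow measurable_const).aestronglyMeasurable
    filter_upwards [hZ] with ω ⟨h1, h2⟩
    rw [Real.norm_eq_abs, abs_of_nonneg (sq_nonneg _)]
    have : |Z ω - a| ≤ m := by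
      rw [abs_le]; constructor <;> nlinarith
    show (Z ω - a)^2 ≤ m^2
    nlinarith [abs_nonneg (Z ω - a), sq_abs (Z ω - a)]
  have hlin_int : Integrable (fun ω => (Z ω - a)/a) μ :=
    ((hintZ.sub (integrable_const a)).div_const a)
  -- pointwise inequality
  have hpt : ∀ᵐ ω ∂μ, Real.log (Z ω)
      ≤ Real.log a + (Z ω - a)/a - (Z ω - a)^2/(2*m^2) := by
    filter_upwards [hZ] with ω ⟨h1, h2⟩
    exact log_taylor_key a m (Z ω) hEZ ham h1 h2
  have hrhs_int : Integrable
      (fun ω => Real.log a + (Z ω - a)/a - (Z ω - a)^2/(2*m^2)) μ :=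
    ((integrable_const (Real.log a)).add hlin_int).sub (hsq_int.div_const _)
  have hint_le : ∫ ω, Real.log (Z ω) ∂μ
      ≤ ∫ ω, (Real.log a + (Z ω - a)/a - (Z ω - a)^2/(2*m^2)) ∂μ :=
    integral_mono_ae hintlog hrhs_int hpt
  have hcalc : ∫ ω, (Real.log a + (Z ω - a)/a - (Z ω - a)^2/(2*m^2)) ∂μ
      = Real.log a + (∫ ω, (Z ω - a)/a ∂μ)
        - (∫ ω, (Z ω - a)^2 ∂μ)/(2*m^2) := by
    rw [integral_sub (f := fun ω => Real.log a + (Z ω - a)/a)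
        (g := fun ω => (Z ω - a)^2/(2*m^2))
        ((integrable_const (Real.log a)).add hlin_int) (hsq_int.div_const _),
      integral_add (f := fun _ => Real.log a) (g := fun ω => (Z ω - a)/a)
        (integrable_const (Real.log a)) hlin_int, integral_const]
    simp [integral_div]
  have hlin : ∫ ω, (Z ω - a)/a ∂μ = 0 := by
    rw [integral_div, integral_sub hintZ (integrable_const a), integral_const]
    simp [← ha_def]
  have hneg : ∫ ω, -Real.log (Z ω) ∂μ = -∫ ω, Real.log (Z ω) ∂μ := by
    exact integral_neg _
  rw [hcalc, hlin] at hint_le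
  rw [hneg]
  linarith
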